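/- Converse direction of the quantum equality characterization: with U1 : H1 → Z and U2 : H2 → Z isometries, if ψ1 = ψ1Q ⊗ ψ1Y and ψ2 = ψ2Q ⊗ ψ2Y with U1 ψ1Q = U2 ψ2Q, then ψ1 ⊗ ψ2 is fixed by the operator ((U2* U1) ⊗ (U1* U2)) ⊗ id (acting on the H1 and H2 tensor factors, with the appropriate swap identification). -/

import Mathlib

open scoped Kronecker

noncomputable section

def tensVec {ι κ : Type*} [Fintype ι] [Fintype κ]
    (x : EuclideanSpace ℂ ι) (y : EuclideanSpace ℂ κ) : EuclideanSpace ℂ (ι × κ) :=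
  WithLp.toLp 2 (fun p => x p.1 * y p.2)

def reindexCLM {ι κ : Type*} [Fintype ι] [Fintype κ] (e : ι ≃ κ) :
    EuclideanSpace ℂ ι →L[ℂ] EuclideanSpace ℂ κ :=
  LinearMap.toContinuousLinearMap
    { toFun := fun f => (WithLp.toLp 2 (fun j => f (e.symm j)) : EuclideanSpace ℂ κ)
      map_add' := fun _ _ => rfl
      map_smul' := fun _ _ => rfl }

def opTensCLM {ι κ μ ν : Type*} [Fintype ι] [Fintype κ] [Fintype μ] [Fintype ν]
    [DecidableEq κ] [DecidableEq ν]
    (A : EuclideanSpace ℂ κ →L[ℂ] EuclideanSpace ℂ ι)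
    (B : EuclideanSpace ℂ ν →L[ℂ] EuclideanSpace ℂ μ) :
    EuclideanSpace ℂ (κ × ν) →L[ℂ] EuclideanSpace ℂ (ι × μ) :=
  LinearMap.toContinuousLinearMap <| Matrix.toEuclideanLin <|
    (Matrix.toEuclideanLin.symm (A : EuclideanSpace ℂ κ →ₗ[ℂ] EuclideanSpace ℂ ι)) ⊗ₖ
      (Matrix.toEuclideanLin.symm (B : EuclideanSpace ℂ ν →ₗ[ℂ] EuclideanSpace ℂ μ))

def eqOpCLM {q₁ q₂ z : Type*} [Fintype q₁] [Fintype q₂] [Fintype z]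
    [DecidableEq q₁] [DecidableEq q₂]
    (V1 : EuclideanSpace ℂ q₁ →L[ℂ] EuclideanSpace ℂ z)
    (V2 : EuclideanSpace ℂ q₂ →L[ℂ] EuclideanSpace ℂ z) :
    EuclideanSpace ℂ (q₁ × q₂) →L[ℂ] EuclideanSpace ℂ (q₁ × q₂) :=
  (reindexCLM (Equiv.prodComm q₂ q₁)).comp
    (opTensCLM ((ContinuousLinearMap.adjoint V2).comp V1)
      ((ContinuousLinearMap.adjoint V1).comp V2))

def eqSub {q₁ q₂ z : Type*} [Fintype q₁] [Fintype q₂] [Fintype z]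
    [DecidableEq q₁] [DecidableEq q₂]
    (V1 : EuclideanSpace ℂ q₁ →L[ℂ] EuclideanSpace ℂ z)
    (V2 : EuclideanSpace ℂ q₂ →L[ℂ] EuclideanSpace ℂ z) :
    Submodule ℂ (EuclideanSpace ℂ (q₁ × q₂)) :=
  LinearMap.ker
    ((eqOpCLM V1 V2 : EuclideanSpace ℂ (q₁ × q₂) →ₗ[ℂ] EuclideanSpace ℂ (q₁ × q₂)) - LinearMap.id)

def eqFull {q₁ y₁ q₂ y₂ z : Type*}
    [Fintype q₁] [Fintype y₁] [Fintype q₂] [Fintype y₂] [Fintype z]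
    [DecidableEq q₁] [DecidableEq q₂] [DecidableEq y₁] [DecidableEq y₂]
    (U1 : EuclideanSpace ℂ q₁ →L[ℂ] EuclideanSpace ℂ z)
    (U2 : EuclideanSpace ℂ q₂ →L[ℂ] EuclideanSpace ℂ z) :
    EuclideanSpace ℂ ((q₁ × y₁) × (q₂ × y₂)) →L[ℂ] EuclideanSpace ℂ ((q₁ × y₁) × (q₂ × y₂)) :=
  (reindexCLM (Equiv.prodProdProdComm q₁ q₂ y₁ y₂)).comp
    ((opTensCLM (eqOpCLM U1 U2) (ContinuousLinearMap.id ℂ (EuclideanSpace ℂ (y₁ × y₂)))).comp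
      (reindexCLM (Equiv.prodProdProdComm q₁ y₁ q₂ y₂)))

def tensRLin {ι κ : Type*} [Fintype ι] [Fintype κ] (ψ : EuclideanSpace ℂ κ) :
    EuclideanSpace ℂ ι →ₗ[ℂ] EuclideanSpace ℂ (ι × κ) where
  toFun φ := tensVec φ ψ
  map_add' x y := by ext p; simp [tensVec, PiLp.add_apply, add_mul]
  map_smul' c x := by ext p; simp [tensVec, PiLp.smul_apply, smul_eq_mul, mul_assoc]

def tensSpan {ι κ : Type*} [Fintype ι] [Fintype κ]
    (S : Submodule ℂ (EuclideanSpace ℂ ι)) (T : Submodule ℂ (EuclideanSpace ℂ κ)) :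
    Submodule ℂ (EuclideanSpace ℂ (ι × κ)) :=
  Submodule.span ℂ {z | ∃ x ∈ S, ∃ y ∈ T, z = tensVec x y}

def spanDiv {ι κ : Type*} [Fintype ι] [Fintype κ]
    (B : Submodule ℂ (EuclideanSpace ℂ (ι × κ))) (ψ : EuclideanSpace ℂ κ) :
    Submodule ℂ (EuclideanSpace ℂ ι) :=
  Submodule.comap (tensRLin ψ) B

def rankOneCLM {H : Type*} [NormedAddCommGroup H] [InnerProductSpace ℂ H] (ψ : H) :
    H →L[ℂ] H :=
  (innerSL ℂ ψ).smulRight ψ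

def ptraceRight {ι κ : Type*} [Fintype ι] [Fintype κ] [DecidableEq ι] [DecidableEq κ]
    (ρ : EuclideanSpace ℂ (ι × κ) →L[ℂ] EuclideanSpace ℂ (ι × κ)) :
    EuclideanSpace ℂ ι →L[ℂ] EuclideanSpace ℂ ι :=
  LinearMap.toContinuousLinearMap <| Matrix.toEuclideanLin <|
    Matrix.of fun i j => ∑ k : κ,
      Matrix.toEuclideanLin.symm
        (ρ : EuclideanSpace ℂ (ι × κ) →ₗ[ℂ] EuclideanSpace ℂ (ι × κ)) (i, k) (j, k)

def ptraceLeft {ι κ : Type*} [Fintype ι] [Fintype κ] [DecidableEq ι] [DecidableEq κ]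
    (ρ : EuclideanSpace ℂ (ι × κ) →L[ℂ] EuclideanSpace ℂ (ι × κ)) :
    EuclideanSpace ℂ κ →L[ℂ] EuclideanSpace ℂ κ :=
  LinearMap.toContinuousLinearMap <| Matrix.toEuclideanLin <|
    Matrix.of fun i j => ∑ k : ι,
      Matrix.toEuclideanLin.symm
        (ρ : EuclideanSpace ℂ (ι × κ) →ₗ[ℂ] EuclideanSpace ℂ (ι × κ)) (k, i) (k, j)

end

namespace Matrix

lemma kronecker_mulVec_mul {R ι κ μ ν : Type*} [CommSemiring R] [Fintype κ] [Fintype ν]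
    (A : Matrix ι κ R) (B : Matrix μ ν R) (x : κ → R) (y : ν → R) :
    (A ⊗ₖ B) *ᵥ (fun p => x p.1 * y p.2) = fun p => (A *ᵥ x) p.1 * (B *ᵥ y) p.2 := by
  ext ⟨i, m⟩
  simp only [mulVec, dotProduct, kroneckerMap_apply, Fintype.sum_prod_type,
    Finset.sum_mul_sum]
  refine Finset.sum_congr rfl fun j _ => Finset.sum_congr rfl fun n _ => ?_
  ring

end Matrix

section

variable {ι κ μ ν : Type*} [Fintype ι] [Fintype κ] [Fintype μ] [Fintype ν]

lemma reindexCLM_prodComm_tensVec (x : EuclideanSpace ℂ ι) (y : EuclideanSpace ℂ κ) :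
    reindexCLM (Equiv.prodComm ι κ) (tensVec x y) = tensVec y x := by
  ext ⟨j, i⟩
  exact mul_comm (x i) (y j)

lemma reindexCLM_prodProdProdComm_tensVec (a : EuclideanSpace ℂ ι) (b : EuclideanSpace ℂ κ)
    (c : EuclideanSpace ℂ μ) (d : EuclideanSpace ℂ ν) :
    reindexCLM (Equiv.prodProdProdComm ι κ μ ν) (tensVec (tensVec a b) (tensVec c d)) =
      tensVec (tensVec a c) (tensVec b d) := by
  ext ⟨⟨i, k⟩, j, l⟩
  show a i * b j * (c k * d l) = a i * c k * (b j * d l)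
  ring

lemma opTensCLM_tensVec [DecidableEq κ] [DecidableEq ν]
    (A : EuclideanSpace ℂ κ →L[ℂ] EuclideanSpace ℂ ι)
    (B : EuclideanSpace ℂ ν →L[ℂ] EuclideanSpace ℂ μ)
    (x : EuclideanSpace ℂ κ) (y : EuclideanSpace ℂ ν) :
    opTensCLM A B (tensVec x y) = tensVec (A x) (B y) := by
  have hA : A x = Matrix.toEuclideanLin (Matrix.toEuclideanLin.symm (A : _ →ₗ[ℂ] _)) x := by
    simp
  have hB : B y = Matrix.toEuclideanLin (Matrix.toEuclideanLin.symm (B : _ →ₗ[ℂ] _)) y := by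
    simp
  rw [hA, hB]
  simp only [opTensCLM, tensVec, LinearMap.coe_toContinuousLinearMap',
    Matrix.toLpLin_apply, Matrix.kronecker_mulVec_mul]

end

section

variable {q₁ y₁ q₂ y₂ z : Type*} [Fintype q₁] [Fintype y₁] [Fintype q₂] [Fintype y₂] [Fintype z]
  [DecidableEq q₁] [DecidableEq q₂]

lemma eqOpCLM_tensVec (V1 : EuclideanSpace ℂ q₁ →L[ℂ] EuclideanSpace ℂ z)
    (V2 : EuclideanSpace ℂ q₂ →L[ℂ] EuclideanSpace ℂ z)
    (x : EuclideanSpace ℂ q₁) (y : EuclideanSpace ℂ q₂) :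
    eqOpCLM V1 V2 (tensVec x y) =
      tensVec (ContinuousLinearMap.adjoint V1 (V2 y)) (ContinuousLinearMap.adjoint V2 (V1 x)) := by
  rw [eqOpCLM, ContinuousLinearMap.comp_apply, opTensCLM_tensVec, reindexCLM_prodComm_tensVec]
  rfl

lemma eqFull_tensVec [DecidableEq y₁] [DecidableEq y₂]
    (U1 : EuclideanSpace ℂ q₁ →L[ℂ] EuclideanSpace ℂ z)
    (U2 : EuclideanSpace ℂ q₂ →L[ℂ] EuclideanSpace ℂ z)
    (a : EuclideanSpace ℂ q₁) (b : EuclideanSpace ℂ y₁)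
    (c : EuclideanSpace ℂ q₂) (d : EuclideanSpace ℂ y₂) :
    eqFull U1 U2 (tensVec (tensVec a b) (tensVec c d)) =
      tensVec (tensVec (ContinuousLinearMap.adjoint U1 (U2 c)) b)
        (tensVec (ContinuousLinearMap.adjoint U2 (U1 a)) d) := by
  rw [eqFull, ContinuousLinearMap.comp_apply, ContinuousLinearMap.comp_apply,
    reindexCLM_prodProdProdComm_tensVec, opTensCLM_tensVec, eqOpCLM_tensVec,
    ContinuousLinearMap.id_apply, reindexCLM_prodProdProdComm_tensVec]

end

lemma ContinuousLinearMap.adjoint_apply_eq_of_apply_eq {E G : Type*}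
    [NormedAddCommGroup E] [InnerProductSpace ℂ E] [CompleteSpace E]
    [NormedAddCommGroup G] [InnerProductSpace ℂ G] [CompleteSpace G]
    {U : E →L[ℂ] G} (hU : (ContinuousLinearMap.adjoint U).comp U = ContinuousLinearMap.id ℂ E)
    {x : E} {v : G} (h : U x = v) :
    ContinuousLinearMap.adjoint U v = x := by
  rw [← h, ← ContinuousLinearMap.comp_apply, hU, ContinuousLinearMap.id_apply]

/-- (converse direction) if `U1, U2` are isometries, `ψ1 = ψ1Q ⊗ ψ1Y`,
`ψ2 = ψ2Q ⊗ ψ2Y` and `U1 ψ1Q = U2 ψ2Q`, then `ψ1 ⊗ ψ2` is fixed by the operator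
`((U2* U1) ⊗ (U1* U2)) ⊗ id` (with the canonical swap identification). -/
theorem stmt5 {q₁ y₁ q₂ y₂ z : Type*}
    [Fintype q₁] [Fintype y₁] [Fintype q₂] [Fintype y₂] [Fintype z]
    [DecidableEq q₁] [DecidableEq q₂] [DecidableEq y₁] [DecidableEq y₂]
    (U1 : EuclideanSpace ℂ q₁ →L[ℂ] EuclideanSpace ℂ z)
    (U2 : EuclideanSpace ℂ q₂ →L[ℂ] EuclideanSpace ℂ z)
    (hU1 : (ContinuousLinearMap.adjoint U1).comp U1 =
      ContinuousLinearMap.id ℂ (EuclideanSpace ℂ q₁))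
    (hU2 : (ContinuousLinearMap.adjoint U2).comp U2 =
      ContinuousLinearMap.id ℂ (EuclideanSpace ℂ q₂))
    (ψ1 : EuclideanSpace ℂ (q₁ × y₁)) (ψ2 : EuclideanSpace ℂ (q₂ × y₂))
    (ψ1Q : EuclideanSpace ℂ q₁) (ψ1Y : EuclideanSpace ℂ y₁)
    (ψ2Q : EuclideanSpace ℂ q₂) (ψ2Y : EuclideanSpace ℂ y₂)
    (h1 : ψ1 = tensVec ψ1Q ψ1Y) (h2 : ψ2 = tensVec ψ2Q ψ2Y)
    (hQ : U1 ψ1Q = U2 ψ2Q) :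
    eqFull U1 U2 (tensVec ψ1 ψ2) = tensVec ψ1 ψ2 := by
  subst h1 h2
  rw [eqFull_tensVec, ContinuousLinearMap.adjoint_apply_eq_of_apply_eq hU1 hQ,
    ContinuousLinearMap.adjoint_apply_eq_of_apply_eq hU2 hQ.symm]
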